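/- arXiv:2010.03111 — 2 statements merged into one kernel-verified Lean document; each statement's English description precedes it below -/
import Mathlib

section
/- Let d, n be positive integers, X = [x_1, ..., x_n] with x_i ∈ ℝ^d, λ > 0, and y ∈ {-1,1}^n with y_i = -1 for some i and y_j = 1 for some j. Then ∫_{ℝ^d} ∫_ℝ [∏_{i=1}^n exp(-V(y_i(β₀ + x_iᵀβ)))] · exp(-(λn/2)‖β‖₂²) dβ₀ dβ ≤ 2‖X‖₁ · d · (2/(λn)) · (2π/(λn))^{(d-1)/2} + 2e · (2π/(λn))^{d/2}, where ‖X‖₁ denotes the sum of the absolute values of all entries of X. -/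
/-!
Since `V ≥ 0` and `V u ≥ 1 - u`, every factor `exp (-V u)` is at most `min 1 (exp (u - 1))`.
Keeping only one factor with label `1` and one with label `-1`, the `β₀`-integrand is at most
`min 1 (exp (β₀ + A - 1)) * min 1 (exp (-β₀ - B - 1))` with `A = ⟪x j, β⟫`, `B = ⟪x i, β⟫`.
This is dominated by two exponential tails of mass one and a plateau of height one and length at
most `|A - B|`, so the `β₀`-integral is at most `|A - B| + 2`. Bounding
`|A - B| ≤ ∑ k, |x j k - x i k| * |β k|` leaves Gaussian integrals of `|β k|` and of `1`, which
factor over the coordinates of `β`.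
-/

open MeasureTheory Real
open scoped RealInnerProductSpace

/-- The DWD loss function. -/
noncomputable def V (u : ℝ) : ℝ := if u ≤ 1/2 then 1 - u else 1/(4*u)

lemma V_nonneg (u : ℝ) : 0 ≤ V u := by
  unfold V
  split_ifs with h
  · linarith
  · have : 0 < u := by linarith [not_le.1 h]
    positivity

lemma one_sub_le_V (u : ℝ) : 1 - u ≤ V u := by
  unfold V
  split_ifs with h
  · rfl
  · rw [le_div_iff₀ (by linarith)]
    nlinarith [sq_nonneg (2 * u - 1)]

lemma exp_neg_V_le_min (u : ℝ) : exp (-V u) ≤ min 1 (exp (u - 1)) :=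
  le_min (exp_le_one_iff.2 (neg_nonpos.2 (V_nonneg u)))
    (exp_le_exp.2 (by linarith [one_sub_le_V u]))

noncomputable def expPlateau (a b : ℝ) : ℝ → ℝ :=
  (Set.Iic a).indicator (fun t => exp (t - a)) + (Set.Icc a b).indicator 1
    + (Set.Ici b).indicator (fun t => exp (b - t))

section expPlateau

variable (a b : ℝ)

lemma min_one_exp_mul_min_one_exp_le_expPlateau (t : ℝ) :
    min 1 (exp (t - a)) * min 1 (exp (b - t)) ≤ expPlateau a b t := by
  have m₁ : min 1 (exp (t - a)) ≤ 1 := min_le_left _ _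
  have m₂ : min 1 (exp (b - t)) ≤ 1 := min_le_left _ _
  have p₁ : 0 ≤ min 1 (exp (t - a)) := le_min zero_le_one (exp_pos _).le
  have p₂ : 0 ≤ min 1 (exp (b - t)) := le_min zero_le_one (exp_pos _).le
  have h₁ : 0 ≤ (Set.Iic a).indicator (fun t => exp (t - a)) t :=
    Set.indicator_nonneg (fun _ _ => (exp_pos _).le) t
  have h₂ : 0 ≤ (Set.Icc a b).indicator (1 : ℝ → ℝ) t :=
    Set.indicator_nonneg (fun _ _ => zero_le_one) t
  have h₃ : 0 ≤ (Set.Ici b).indicator (fun t => exp (b - t)) t :=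
    Set.indicator_nonneg (fun _ _ => (exp_pos _).le) t
  simp only [expPlateau, Pi.add_apply]
  rcases le_or_gt t a with hta | hat
  · have := (mul_le_of_le_one_right p₁ m₂).trans (min_le_right _ _)
    rw [Set.indicator_of_mem (Set.mem_Iic.2 hta)] at h₁ ⊢
    linarith
  rcases le_or_gt b t with hbt | htb
  · have := (mul_le_of_le_one_left p₂ m₁).trans (min_le_right _ _)
    rw [Set.indicator_of_mem (Set.mem_Ici.2 hbt) (fun t => exp (b - t))] at h₃ ⊢
    linarith
  · have := mul_le_one₀ m₁ p₂ m₂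
    rw [Set.indicator_of_mem (Set.mem_Icc.2 ⟨hat.le, htb.le⟩), Pi.one_apply] at h₂ ⊢
    linarith

lemma integral_indicator_Iic_exp_sub :
    ∫ t, (Set.Iic a).indicator (fun t => exp (t - a)) t = 1 := by
  simp_rw [integral_indicator measurableSet_Iic, exp_sub]
  rw [integral_div, integral_exp_Iic, div_self (exp_ne_zero a)]

lemma integral_indicator_Ici_exp_sub :
    ∫ t, (Set.Ici b).indicator (fun t => exp (b - t)) t = 1 := by
  simp_rw [integral_indicator measurableSet_Ici, integral_Ici_eq_integral_Ioi, sub_eq_add_neg,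
    exp_add]
  rw [integral_const_mul, integral_exp_neg_Ioi, ← exp_add, add_neg_cancel, exp_zero]

lemma integral_expPlateau : ∫ t, expPlateau a b t = max (b - a) 0 + 2 := by
  have h₁ : Integrable ((Set.Iic a).indicator fun t => exp (t - a)) :=
    .of_integral_ne_zero (by simp [integral_indicator_Iic_exp_sub])
  have h₂ : Integrable ((Set.Icc a b).indicator (1 : ℝ → ℝ)) :=
    (integrableOn_const measure_Icc_lt_top.ne).integrable_indicator measurableSet_Icc
  have h₃ : Integrable ((Set.Ici b).indicator fun t => exp (b - t)) :=
    .of_integral_ne_zero (by simp [integral_indicator_Ici_exp_sub])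
  rw [expPlateau, integral_add' (h₁.add h₂) h₃, integral_add' h₁ h₂,
    integral_indicator_Iic_exp_sub, integral_indicator_one measurableSet_Icc, volume_real_Icc,
    integral_indicator_Ici_exp_sub]
  ring

lemma integrable_expPlateau : Integrable (expPlateau a b) :=
  .of_integral_ne_zero (by rw [integral_expPlateau]; positivity)

end expPlateau

lemma integral_prod_exp_neg_V_le {ι : Type*} [Fintype ι] (y s : ι → ℝ) {i j : ι}
    (hi : y i = -1) (hj : y j = 1) :
    ∫ t, ∏ l, exp (-V (y l * (t + s l))) ≤ |s j - s i| + 2 := by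
  classical
  have hij : i ≠ j := by rintro rfl; linarith
  have bound (t : ℝ) :
      ∏ l, exp (-V (y l * (t + s l))) ≤ expPlateau (1 - s j) (-1 - s i) t := calc
    ∏ l, exp (-V (y l * (t + s l)))
        ≤ ∏ l ∈ {j, i}, exp (-V (y l * (t + s l))) :=
      Finset.prod_le_prod_of_subset_of_le_one (Finset.subset_univ _)
        (fun l _ => (exp_pos _).le) fun l _ _ => (exp_neg_V_le_min _).trans (min_le_left _ _)
    _ = exp (-V (y j * (t + s j))) * exp (-V (y i * (t + s i))) := Finset.prod_pair hij.symm
    _ ≤ min 1 (exp (y j * (t + s j) - 1)) * min 1 (exp (y i * (t + s i) - 1)) :=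
      mul_le_mul (exp_neg_V_le_min _) (exp_neg_V_le_min _) (exp_pos _).le
        (le_min zero_le_one (exp_pos _).le)
    _ = min 1 (exp (t - (1 - s j))) * min 1 (exp (-1 - s i - t)) := by
      rw [hi, hj]; ring_nf
    _ ≤ expPlateau (1 - s j) (-1 - s i) t := min_one_exp_mul_min_one_exp_le_expPlateau _ _ t
  calc ∫ t, ∏ l, exp (-V (y l * (t + s l)))
      ≤ ∫ t, expPlateau (1 - s j) (-1 - s i) t :=
        integral_mono_of_nonneg (.of_forall fun t => Finset.prod_nonneg fun l _ => (exp_pos _).le)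
          (integrable_expPlateau _ _) (.of_forall bound)
    _ = max (s j - s i - 2) 0 + 2 := by rw [integral_expPlateau]; ring_nf
    _ ≤ |s j - s i| + 2 := by
      gcongr
      exact max_le (by linarith [le_abs_self (s j - s i)]) (abs_nonneg _)

lemma integral_abs_mul_exp_neg_mul_sq {c : ℝ} (hc : 0 < c) :
    ∫ u : ℝ, |u| * exp (-c * u ^ 2) = c⁻¹ := by
  have half : ∫ u in Set.Ioi (0 : ℝ), u * exp (-c * u ^ 2) = (2 * c)⁻¹ := by
    have := integral_mul_cexp_neg_mul_sq (b := (c : ℂ)) (by simpa using hc)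
    norm_cast at this
  have even : (fun u : ℝ => |u| * exp (-c * u ^ 2)) = fun u => |u| * exp (-c * |u| ^ 2) := by
    simp only [sq_abs]
  rw [even, integral_comp_abs (f := fun u => u * exp (-c * u ^ 2)), half]
  field_simp

namespace EuclideanSpace

variable {ι : Type*} [Fintype ι] {c : ℝ}

lemma integral_exp_neg_mul_norm_sq (hc : 0 < c) :
    ∫ β : EuclideanSpace ℝ ι, exp (-c * ‖β‖ ^ 2) = (π / c) ^ ((Fintype.card ι : ℝ) / 2) := by
  rw [GaussianFourier.integral_rexp_neg_mul_sq_norm hc, finrank_euclideanSpace]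

lemma integrable_exp_neg_mul_norm_sq (hc : 0 < c) :
    Integrable fun β : EuclideanSpace ℝ ι => exp (-c * ‖β‖ ^ 2) :=
  .of_integral_ne_zero <| by rw [integral_exp_neg_mul_norm_sq hc]; positivity

lemma integral_abs_apply_mul_exp_neg_mul_norm_sq (hc : 0 < c) (k : ι) :
    ∫ β : EuclideanSpace ℝ ι, |β k| * exp (-c * ‖β‖ ^ 2)
      = c⁻¹ * (π / c) ^ (((Fintype.card ι : ℝ) - 1) / 2) := by
  classical
  let f : ι → ℝ → ℝ :=
    Function.update (fun _ u => exp (-c * u ^ 2)) k (fun u => |u| * exp (-c * u ^ 2))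
  have hf (x : ι → ℝ) : |x k| * exp (-c * ∑ i, x i ^ 2) = ∏ i, f i (x i) := by
    rw [Finset.mul_sum, exp_sum, ← Finset.mul_prod_erase _ _ (Finset.mem_univ k),
      ← Finset.mul_prod_erase _ _ (Finset.mem_univ k), ← mul_assoc]
    congr 1
    · simp [f]
    · refine Finset.prod_congr rfl fun i hi => ?_
      simp [f, Function.update_of_ne (Finset.ne_of_mem_erase hi)]
  have hfi : (fun i => ∫ u, f i u) = Function.update (fun _ => √(π / c)) k c⁻¹ := by
    ext i
    rcases eq_or_ne i k with rfl | hik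
    · simpa only [f, Function.update_self] using integral_abs_mul_exp_neg_mul_sq hc
    · simpa only [f, Function.update_of_ne hik] using integral_gaussian c
  calc ∫ β : EuclideanSpace ℝ ι, |β k| * exp (-c * ‖β‖ ^ 2)
      = ∫ x : ι → ℝ, ∏ i, f i (x i) := by
        simp_rw [real_norm_sq_eq, hf]
        exact (volume_preserving_symm_measurableEquiv_toLp ι).integral_comp'
          (g := fun x => ∏ i, f i (x i))
    _ = c⁻¹ * √(π / c) ^ (Fintype.card ι - 1) := by
        rw [integral_fintype_prod_volume_eq_prod, hfi, Finset.prod_update_of_mem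
          (Finset.mem_univ k), Finset.prod_const, ← Finset.compl_eq_univ_sdiff,
          Finset.card_compl, Finset.card_singleton]
    _ = c⁻¹ * (π / c) ^ (((Fintype.card ι : ℝ) - 1) / 2) := by
        have : 1 ≤ Fintype.card ι := Fintype.card_pos_iff.2 ⟨k⟩
        rw [rpow_div_two_eq_sqrt _ (by positivity), ← rpow_natCast, Nat.cast_sub this,
          Nat.cast_one]

lemma integrable_abs_apply_mul_exp_neg_mul_norm_sq (hc : 0 < c) (k : ι) :
    Integrable fun β : EuclideanSpace ℝ ι => |β k| * exp (-c * ‖β‖ ^ 2) :=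
  .of_integral_ne_zero <| by rw [integral_abs_apply_mul_exp_neg_mul_norm_sq hc]; positivity

lemma integrable_sum_mul_abs_apply_add_mul_exp_neg_mul_norm_sq (hc : 0 < c) (a : ι → ℝ)
    (C : ℝ) :
    Integrable fun β : EuclideanSpace ℝ ι => (∑ k, a k * |β k| + C) * exp (-c * ‖β‖ ^ 2) := by
  simp_rw [add_mul, Finset.sum_mul, mul_assoc]
  exact .add (integrable_finsetSum _ fun k _ =>
      (integrable_abs_apply_mul_exp_neg_mul_norm_sq hc k).const_mul _)
    ((integrable_exp_neg_mul_norm_sq hc).const_mul _)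

lemma integral_sum_mul_abs_apply_add_mul_exp_neg_mul_norm_sq (hc : 0 < c) (a : ι → ℝ) (C : ℝ) :
    ∫ β : EuclideanSpace ℝ ι, (∑ k, a k * |β k| + C) * exp (-c * ‖β‖ ^ 2)
      = (∑ k, a k) * (c⁻¹ * (π / c) ^ (((Fintype.card ι : ℝ) - 1) / 2))
        + C * (π / c) ^ ((Fintype.card ι : ℝ) / 2) := by
  simp_rw [add_mul, Finset.sum_mul, mul_assoc]
  rw [integral_add (integrable_finsetSum _ fun k _ =>
      (integrable_abs_apply_mul_exp_neg_mul_norm_sq hc k).const_mul _)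
      ((integrable_exp_neg_mul_norm_sq hc).const_mul _),
    integral_finsetSum _ fun k _ =>
      (integrable_abs_apply_mul_exp_neg_mul_norm_sq hc k).const_mul _]
  simp only [integral_const_mul, integral_abs_apply_mul_exp_neg_mul_norm_sq hc,
    integral_exp_neg_mul_norm_sq hc]

lemma abs_inner_le_sum_abs_mul_abs (v w : EuclideanSpace ℝ ι) :
    |⟪v, w⟫| ≤ ∑ k, |v k| * |w k| := by
  rw [PiLp.inner_apply]
  refine (Finset.abs_sum_le_sum_abs _ _).trans_eq (Finset.sum_congr rfl fun k _ => ?_)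
  rw [RCLike.inner_apply, conj_trivial, abs_mul, mul_comm]

lemma sum_abs_sub_apply_le {κ : Type*} [Fintype κ] (x : κ → EuclideanSpace ℝ ι) (i j : κ) :
    ∑ k, |(x j - x i) k| ≤ 2 * (∑ l, ∑ k, |x l k|) * Fintype.card ι := by
  have entry_le (l : κ) (k : ι) : |x l k| ≤ ∑ l, ∑ k, |x l k| :=
    (Finset.single_le_sum (f := fun k => |x l k|) (fun _ _ => abs_nonneg _)
      (Finset.mem_univ k)).trans
    (Finset.single_le_sum (f := fun l => ∑ k, |x l k|)
      (fun _ _ => Finset.sum_nonneg fun _ _ => abs_nonneg _) (Finset.mem_univ l))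
  calc ∑ k, |(x j - x i) k| ≤ ∑ _k : ι, 2 * ∑ l, ∑ k, |x l k| :=
        Finset.sum_le_sum fun k _ => by
          rw [PiLp.sub_apply]
          linarith [abs_sub (x j k) (x i k), entry_le j k, entry_le i k]
    _ = 2 * (∑ l, ∑ k, |x l k|) * Fintype.card ι := by simp [mul_comm]

end EuclideanSpace

theorem dwd_posterior_integral_bound_general (d n : ℕ)
    (x : Fin n → EuclideanSpace ℝ (Fin d)) (lam : ℝ) (hlam : 0 < lam)
    (y : Fin n → ℝ)
    (hneg : ∃ i, y i = -1) (hpos : ∃ j, y j = 1) :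
    (∫ β : EuclideanSpace ℝ (Fin d), ∫ β₀ : ℝ,
        (∏ i, Real.exp (-V (y i * (β₀ + ⟪x i, β⟫)))) *
          Real.exp (-(lam * n / 2) * ‖β‖^2))
      ≤ 2 * (∑ i, ∑ j, |x i j|) * d * (2 / (lam * n)) *
          (2 * π / (lam * n)) ^ (((d : ℝ) - 1) / 2)
        + 2 * Real.exp 1 * (2 * π / (lam * n)) ^ ((d : ℝ) / 2) := by
  obtain ⟨i, hi⟩ := hneg
  obtain ⟨j, hj⟩ := hpos
  have hc : 0 < lam * n / 2 := by have := i.pos; positivity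
  set c := lam * n / 2
  have inner_bound (β : EuclideanSpace ℝ (Fin d)) :
      ∫ β₀, (∏ l, exp (-V (y l * (β₀ + ⟪x l, β⟫)))) * exp (-c * ‖β‖ ^ 2)
        ≤ (∑ k, |(x j - x i) k| * |β k| + 2) * exp (-c * ‖β‖ ^ 2) := by
    rw [integral_mul_const]
    gcongr
    refine (integral_prod_exp_neg_V_le y (fun l => ⟪x l, β⟫) hi hj).trans ?_
    rw [← inner_sub_left]
    gcongr
    exact EuclideanSpace.abs_inner_le_sum_abs_mul_abs _ _
  calc _ ≤ ∫ β : EuclideanSpace ℝ (Fin d),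
          (∑ k, |(x j - x i) k| * |β k| + 2) * exp (-c * ‖β‖ ^ 2) :=
        integral_mono_of_nonneg (.of_forall fun β => integral_nonneg fun β₀ => by positivity)
          (EuclideanSpace.integrable_sum_mul_abs_apply_add_mul_exp_neg_mul_norm_sq hc _ _)
          (.of_forall inner_bound)
    _ = (∑ k, |(x j - x i) k|) * (c⁻¹ * (π / c) ^ (((d : ℝ) - 1) / 2))
          + 2 * (π / c) ^ ((d : ℝ) / 2) := by
        simpa using EuclideanSpace.integral_sum_mul_abs_apply_add_mul_exp_neg_mul_norm_sq hc
          (fun k => |(x j - x i) k|) 2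
    _ ≤ 2 * (∑ i, ∑ j, |x i j|) * d * (c⁻¹ * (π / c) ^ (((d : ℝ) - 1) / 2))
          + 2 * exp 1 * (π / c) ^ ((d : ℝ) / 2) := by
        gcongr
        · simpa using EuclideanSpace.sum_abs_sub_apply_le x i j
        · linarith [one_le_exp zero_le_one]
    _ = _ := by
        have hπc : π / c = 2 * π / (lam * n) := by simp only [c]; field_simp
        have hc' : c⁻¹ = 2 / (lam * n) := by simp [c]
        rw [hπc, hc']
        ring

/-- the iterated integral of the unnormalized Bayesian DWD
posterior density is bounded by
`2‖X‖₁ · d · (2/(λn)) · (2π/(λn))^((d-1)/2) + 2e · (2π/(λn))^(d/2)`,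
where `‖X‖₁` is the sum of the absolute values of all entries of `X`. -/
theorem dwd_posterior_integral_bound (d n : ℕ) (hd : 0 < d) (hn : 0 < n)
    (x : Fin n → EuclideanSpace ℝ (Fin d)) (lam : ℝ) (hlam : 0 < lam)
    (y : Fin n → ℝ) (hy : ∀ i, y i = -1 ∨ y i = 1)
    (hneg : ∃ i, y i = -1) (hpos : ∃ j, y j = 1) :
    (∫ β : EuclideanSpace ℝ (Fin d), ∫ β₀ : ℝ,
        (∏ i, Real.exp (-V (y i * (β₀ + ⟪x i, β⟫)))) *
          Real.exp (-(lam * n / 2) * ‖β‖^2))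
      ≤ 2 * (∑ i, ∑ j, |x i j|) * d * (2 / (lam * n)) *
          (2 * π / (lam * n)) ^ (((d : ℝ) - 1) / 2)
        + 2 * Real.exp 1 * (2 * π / (lam * n)) ^ ((d : ℝ) / 2) :=
  dwd_posterior_integral_bound_general d n x lam hlam y hneg hpos
end

section
/- The prior score term f(u) = exp(-V(u)) + exp(-V(-u)) is an even function of u, is strictly increasing on [0, ∞), and hence attains its unique global minimum at u = 0; that is, the prior gives higher density to directions whose scores are not concentrated near 0. -/
/-!
On `[0, 1/2]` the prior term is `2 e⁻¹ cosh u`. On `[1/2, ∞)` it is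
`exp (-1/(4u)) + exp (-1 - u)`, whose derivative `exp (-1/(4u)) / (4u²) - exp (-1 - u)` is positive:
after bounding `exp (-1/(4u)) ≥ 1 - 1/(4u)` this amounts to `16u³ < exp (1 + u) (4u - 1)`, which
the degree-five Taylor polynomial of `exp` already certifies. Evenness then puts the minimum at `0`.
-/

open Real Set

/-- The prior score term `f(u) = exp(-V u) + exp(-V (-u))`. -/
noncomputable def priorTerm (u : ℝ) : ℝ := Real.exp (-V u) + Real.exp (-V (-u))

lemma V_of_le_half {u : ℝ} (h : u ≤ 1/2) : V u = 1 - u := if_pos h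

lemma V_of_half_le {u : ℝ} (h : 1/2 ≤ u) : V u = 1/(4*u) := by
  rcases h.eq_or_lt with rfl | h
  · norm_num [V]
  · exact if_neg h.not_ge

lemma V_neg_of_nonneg {u : ℝ} (h : 0 ≤ u) : V (-u) = 1 + u := by
  rw [V_of_le_half (by linarith), sub_neg_eq_add]

lemma priorTerm_neg (u : ℝ) : priorTerm (-u) = priorTerm u := by
  rw [priorTerm, priorTerm, neg_neg, add_comm]

lemma priorTerm_eq_cosh {u : ℝ} (h₀ : 0 ≤ u) (h : u ≤ 1/2) :
    priorTerm u = 2 * exp (-1) * cosh u := by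
  rw [priorTerm, V_of_le_half h, V_neg_of_nonneg h₀, cosh_eq, show -(1 - u) = -1 + u by ring,
    show -(1 + u) = -1 + -u by ring, exp_add, exp_add]
  ring

lemma priorTerm_strictMonoOn_Icc : StrictMonoOn priorTerm (Icc 0 (1/2)) := by
  intro a ha b hb hab
  rw [priorTerm_eq_cosh ha.1 ha.2, priorTerm_eq_cosh hb.1 hb.2]
  gcongr
  exact cosh_strictMonoOn ha.1 hb.1 hab

noncomputable def priorTermTail (u : ℝ) : ℝ := exp (-(1/(4*u))) + exp (-1 - u)

lemma priorTerm_eq_tail {u : ℝ} (h : 1/2 ≤ u) : priorTerm u = priorTermTail u := by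
  rw [priorTerm, priorTermTail, V_of_half_le h, V_neg_of_nonneg (by linarith), neg_add']

lemma hasDerivAt_priorTermTail {u : ℝ} (hu : u ≠ 0) :
    HasDerivAt priorTermTail (exp (-(1/(4*u))) / (4*u^2) - exp (-1 - u)) u := by
  have hinv : HasDerivAt (fun x : ℝ => -(1/(4*x))) (1/(4*u^2)) u := by
    have heq : (fun x : ℝ => -(1/(4*x))) = fun x => -1/4 * x⁻¹ := by funext x; ring
    rw [heq]
    exact ((hasDerivAt_inv hu).const_mul (-1/4 : ℝ)).congr_deriv (by ring)
  have hlin : HasDerivAt (fun x : ℝ => -1 - x) (-1) u := (hasDerivAt_id u).const_sub (-1)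
  exact (hinv.exp.add hlin.exp).congr_deriv (by ring)

-- The first factor is the degree-five Taylor polynomial of `exp` at `1 + u`; the margin is only
-- about `0.6` (near `u ≈ 1.87`), so no shorter polynomial will do.
lemma sixteen_mul_cube_lt {u : ℝ} (hu : 1/2 < u) :
    16 * u ^ 3 < (1 + (1 + u) + (1 + u) ^ 2 / 2 + (1 + u) ^ 3 / 6 + (1 + u) ^ 4 / 24
      + (1 + u) ^ 5 / 120) * (4 * u - 1) := by
  obtain ⟨v, hv, rfl⟩ : ∃ v : ℝ, 0 < v ∧ u = v + 1/2 := ⟨u - 1/2, by linarith, by ring⟩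
  nlinarith [mul_nonneg hv.le (sq_nonneg (v^2+v-3)), sq_nonneg (v^2 - 2), sq_nonneg (v*(v-1)),
    sq_nonneg (v - 3/2), mul_nonneg hv.le (sq_nonneg (v - 3/2)),
    pow_pos hv 5, pow_pos hv 6, pow_pos hv 3, pow_pos hv 4]

lemma sixteen_mul_cube_lt_exp {u : ℝ} (hu : 1/2 < u) :
    16 * u ^ 3 < exp (1 + u) * (4 * u - 1) := by
  have htaylor := sum_le_exp_of_nonneg (x := 1 + u) (by linarith) 6
  norm_num [Finset.sum_range_succ, Nat.factorial] at htaylor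
  nlinarith [sixteen_mul_cube_lt hu]

lemma exp_neg_one_sub_lt {u : ℝ} (hu : 1/2 < u) :
    exp (-1 - u) < exp (-(1/(4*u))) / (4*u^2) := by
  have hu₀ : 0 < u := by linarith
  calc exp (-1 - u) = 1 / exp (1 + u) := by rw [one_div, ← exp_neg, neg_add']
    _ < (4*u - 1) / (16*u^3) := by
      rw [div_lt_div_iff₀ (exp_pos _) (by positivity)]
      linarith [sixteen_mul_cube_lt_exp hu]
    _ = (1 - 1/(4*u)) / (4*u^2) := by field_simp; ring
    _ ≤ exp (-(1/(4*u))) / (4*u^2) := by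
      gcongr
      linarith [add_one_le_exp (-(1/(4*u)))]

lemma priorTermTail_strictMonoOn : StrictMonoOn priorTermTail (Ici (1/2)) := by
  have hderiv : ∀ x ∈ Ici (1/2 : ℝ), HasDerivAt priorTermTail
      (exp (-(1/(4*x))) / (4*x^2) - exp (-1 - x)) x :=
    fun x hx => hasDerivAt_priorTermTail (by simp only [mem_Ici] at hx; linarith)
  refine strictMonoOn_of_hasDerivWithinAt_pos (convex_Ici _)
    (fun x hx => (hderiv x hx).continuousAt.continuousWithinAt)
    (fun x hx => (hderiv x (interior_subset hx)).hasDerivWithinAt) (fun x hx => ?_)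
  rw [interior_Ici] at hx
  exact sub_pos.mpr (exp_neg_one_sub_lt hx)

lemma priorTerm_strictMonoOn : StrictMonoOn priorTerm (Ici 0) := by
  have htail : StrictMonoOn priorTerm (Ici (1/2)) :=
    priorTermTail_strictMonoOn.congr fun u hu => (priorTerm_eq_tail hu).symm
  rw [← Icc_union_Ici_eq_Ici (by norm_num : (0 : ℝ) ≤ 1/2)]
  exact priorTerm_strictMonoOn_Icc.union htail (isGreatest_Icc (by norm_num)) isLeast_Ici

/-- `f` is even, strictly increasing on `[0, ∞)`, and attains its
unique global minimum at `u = 0`. -/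
theorem priorTerm_even_min :
    (∀ u : ℝ, priorTerm (-u) = priorTerm u) ∧
      StrictMonoOn priorTerm (Set.Ici 0) ∧
      ∀ u : ℝ, u ≠ 0 → priorTerm 0 < priorTerm u := by
  refine ⟨priorTerm_neg, priorTerm_strictMonoOn, fun u hu => ?_⟩
  have habs : priorTerm |u| = priorTerm u := by
    rcases abs_choice u with h | h <;> rw [h]
    exact priorTerm_neg u
  rw [← habs]
  exact priorTerm_strictMonoOn self_mem_Ici (abs_nonneg u) (abs_pos.mpr hu)
end
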